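/- Let A, K, W : ℝ → ℝ be twice differentiable at 0 with A(0) = K(0) = 0, A'(0) = K'(0) = 0, K(t) ≥ 0, A(t) ≥ 0, and let W > 0 be a constant. Define C(t) = (1/2)[A(t) − W + √((A(t) − W)² + 4·W·K(t))]. Then C(0) = 0, C'(0) = 0, and C''(0) = K''(0). -/

import Mathlib

/-!
Write `C t = clr W (A t) (K t)`. Near `0` the chain rule gives
`C' = α • A' + β • K'`, where `α`, `β` are the partial derivatives of `clr` along the path;
they are continuous at `0` because the discriminant there is `W ^ 2 > 0`. As `A'` and `K'`
vanish at `0`, differentiating this expression at `0` needs only the continuity of `α` and `β`,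
so `C''(0) = α(0) A''(0) + β(0) K''(0)`, and at the origin `α = 0`, `β = 1`.
-/

open Filter Topology

section
variable {𝕜 E : Type*} [NontriviallyNormedField 𝕜] [NormedAddCommGroup E] [NormedSpace 𝕜 E]

theorem HasDerivAt.continuousAt_smul_of_eq_zero {f : 𝕜 → E} {g : 𝕜 → 𝕜} {f' : E} {x : 𝕜}
    (hf : HasDerivAt f f' x) (hfx : f x = 0) (hg : ContinuousAt g x) :
    HasDerivAt (fun t => g t • f t) (g x • f') x := by
  rw [hasDerivAt_iff_tendsto_slope] at hf ⊢
  have hslope : slope (fun t => g t • f t) x = fun t => g t • slope f x t := by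
    ext t
    simp only [slope_def_module, hfx, smul_zero, sub_zero, smul_comm (t - x)⁻¹]
  rw [hslope]
  exact (hg.tendsto.mono_left nhdsWithin_le_nhds).smul hf

theorem hasDerivAt_deriv_of_eventually_hasDerivAt_smul_add_smul {F u v : 𝕜 → E} {α β : 𝕜 → 𝕜}
    {u' v' : E} {x : 𝕜} (hF : ∀ᶠ t in 𝓝 x, HasDerivAt F (α t • u t + β t • v t) t)
    (hα : ContinuousAt α x) (hβ : ContinuousAt β x)
    (hu : HasDerivAt u u' x) (hv : HasDerivAt v v' x) (hux : u x = 0) (hvx : v x = 0) :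
    HasDerivAt (deriv F) (α x • u' + β x • v') x := by
  have hderiv : deriv F =ᶠ[𝓝 x] fun t => α t • u t + β t • v t :=
    hF.mono fun t ht => ht.deriv
  exact ((hu.continuousAt_smul_of_eq_zero hux hα).add
    (hv.continuousAt_smul_of_eq_zero hvx hβ)).congr_of_eventuallyEq hderiv

end

noncomputable def clrDisc (W a k : ℝ) : ℝ := (a - W) ^ 2 + 4 * W * k

-- `clr W a k` is the CLR statistic with Wald value `W`, AR value `a` and K value `k`.
noncomputable def clr (W a k : ℝ) : ℝ := (1 / 2) * (a - W + √(clrDisc W a k))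

noncomputable def clrDerivA (W a k : ℝ) : ℝ := (1 + (a - W) / √(clrDisc W a k)) / 2

noncomputable def clrDerivK (W a k : ℝ) : ℝ := W / √(clrDisc W a k)

theorem clrDisc_zero_zero (W : ℝ) : clrDisc W 0 0 = W ^ 2 := by
  simp [clrDisc]

theorem clr_zero_zero {W : ℝ} (hW : 0 ≤ W) : clr W 0 0 = 0 := by
  simp [clr, clrDisc_zero_zero, Real.sqrt_sq hW]

theorem clrDerivA_zero_zero {W : ℝ} (hW : 0 < W) : clrDerivA W 0 0 = 0 := by
  simp [clrDerivA, clrDisc_zero_zero, Real.sqrt_sq hW.le, hW.ne']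

theorem clrDerivK_zero_zero {W : ℝ} (hW : 0 < W) : clrDerivK W 0 0 = 1 := by
  simp [clrDerivK, clrDisc_zero_zero, Real.sqrt_sq hW.le, hW.ne']

section
variable {a k : ℝ → ℝ} {W x : ℝ}

theorem continuousAt_clrDisc (ha : ContinuousAt a x) (hk : ContinuousAt k x) :
    ContinuousAt (fun t => clrDisc W (a t) (k t)) x := by
  unfold clrDisc; fun_prop

theorem continuousAt_clrDerivA (ha : ContinuousAt a x) (hk : ContinuousAt k x)
    (hpos : 0 < clrDisc W (a x) (k x)) : ContinuousAt (fun t => clrDerivA W (a t) (k t)) x :=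
  ((continuousAt_const.add ((ha.sub continuousAt_const).div
    (continuousAt_clrDisc ha hk).sqrt (Real.sqrt_pos.2 hpos).ne')).div_const 2)

theorem continuousAt_clrDerivK (ha : ContinuousAt a x) (hk : ContinuousAt k x)
    (hpos : 0 < clrDisc W (a x) (k x)) : ContinuousAt (fun t => clrDerivK W (a t) (k t)) x :=
  continuousAt_const.div (continuousAt_clrDisc ha hk).sqrt (Real.sqrt_pos.2 hpos).ne'

theorem hasDerivAt_clr {a' k' : ℝ} (ha : HasDerivAt a a' x) (hk : HasDerivAt k k' x)
    (hpos : 0 < clrDisc W (a x) (k x)) :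
    HasDerivAt (fun t => clr W (a t) (k t))
      (clrDerivA W (a x) (k x) * a' + clrDerivK W (a x) (k x) * k') x := by
  have hdisc : HasDerivAt (fun t => clrDisc W (a t) (k t))
      (2 * (a x - W) * a' + 4 * W * k') x := by
    refine (((ha.sub_const W).pow 2).add (hk.const_mul (4 * W))).congr_deriv ?_
    norm_num
  have hS := ((ha.sub_const W).add (hdisc.sqrt hpos.ne')).const_mul (1 / 2)
  have hS0 : √(clrDisc W (a x) (k x)) ≠ 0 := (Real.sqrt_pos.2 hpos).ne'
  refine hS.congr_deriv ?_
  simp only [clrDerivA, clrDerivK]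
  field_simp
  ring
end

theorem stmt7_general (A K : ℝ → ℝ) (W : ℝ) (hW : 0 < W)
    (hAdiff : ∀ᶠ t in nhds (0 : ℝ), DifferentiableAt ℝ A t)
    (hAdiff2 : DifferentiableAt ℝ (deriv A) 0)
    (hKdiff : ∀ᶠ t in nhds (0 : ℝ), DifferentiableAt ℝ K t)
    (hKdiff2 : DifferentiableAt ℝ (deriv K) 0)
    (hA0 : A 0 = 0) (hK0 : K 0 = 0)
    (hA'0 : deriv A 0 = 0) (hK'0 : deriv K 0 = 0)
    (C : ℝ → ℝ)
    (hC : ∀ t, C t = (1 / 2) * (A t - W + Real.sqrt ((A t - W) ^ 2 + 4 * W * K t))) :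
    C 0 = 0 ∧ deriv C 0 = 0 ∧ deriv (deriv C) 0 = deriv (deriv K) 0 := by
  have hCeq : C = fun t => clr W (A t) (K t) := funext hC
  have hAc := hAdiff.self_of_nhds.continuousAt
  have hKc := hKdiff.self_of_nhds.continuousAt
  have hpos0 : 0 < clrDisc W (A 0) (K 0) := by rw [hA0, hK0, clrDisc_zero_zero]; positivity
  have hpos : ∀ᶠ t in 𝓝 0, 0 < clrDisc W (A t) (K t) :=
    (continuousAt_clrDisc hAc hKc).eventually (lt_mem_nhds hpos0)
  have hC' : ∀ᶠ t in 𝓝 0, HasDerivAt C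
      (clrDerivA W (A t) (K t) * deriv A t + clrDerivK W (A t) (K t) * deriv K t) t := by
    filter_upwards [hAdiff, hKdiff, hpos] with t hA hK hpost
    exact hCeq ▸ hasDerivAt_clr hA.hasDerivAt hK.hasDerivAt hpost
  have hC'' := hasDerivAt_deriv_of_eventually_hasDerivAt_smul_add_smul hC'
    (continuousAt_clrDerivA hAc hKc hpos0) (continuousAt_clrDerivK hAc hKc hpos0)
    hAdiff2.hasDerivAt hKdiff2.hasDerivAt hA'0 hK'0
  refine ⟨?_, ?_, ?_⟩
  · rw [hCeq]
    dsimp only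
    rw [hA0, hK0, clr_zero_zero hW.le]
  · rw [hC'.self_of_nhds.deriv, hA'0, hK'0]
    ring
  · rw [hC''.deriv, hA0, hK0, clrDerivA_zero_zero hW, clrDerivK_zero_zero hW]
    ring

/-- with A, K twice differentiable at 0, vanishing to second order,
nonnegative, and W > 0 constant, the CLR functional
C(t) = (1/2)[A(t) − W + √((A(t) − W)² + 4WK(t))] satisfies
C(0) = 0, C'(0) = 0 and C''(0) = K''(0). -/
theorem stmt7 (A K : ℝ → ℝ) (W : ℝ) (hW : 0 < W)
    (hAdiff : ∀ᶠ t in nhds (0 : ℝ), DifferentiableAt ℝ A t)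
    (hAdiff2 : DifferentiableAt ℝ (deriv A) 0)
    (hKdiff : ∀ᶠ t in nhds (0 : ℝ), DifferentiableAt ℝ K t)
    (hKdiff2 : DifferentiableAt ℝ (deriv K) 0)
    (hA0 : A 0 = 0) (hK0 : K 0 = 0)
    (hA'0 : deriv A 0 = 0) (hK'0 : deriv K 0 = 0)
    (hAnn : ∀ t, 0 ≤ A t) (hKnn : ∀ t, 0 ≤ K t)
    (C : ℝ → ℝ)
    (hC : ∀ t, C t = (1 / 2) * (A t - W + Real.sqrt ((A t - W) ^ 2 + 4 * W * K t))) :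
    C 0 = 0 ∧ deriv C 0 = 0 ∧ deriv (deriv C) 0 = deriv (deriv K) 0 :=
  stmt7_general A K W hW hAdiff hAdiff2 hKdiff hKdiff2 hA0 hK0 hA'0 hK'0 C hC
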